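/- arXiv:2107.08877 — 2 statements merged into one kernel-verified Lean document; each statement's English description precedes it below -/
import Mathlib

section
/- For every λ ∈ Y and every n ≥ 1, with i = 2n−1 one has: λ(n) = 0 if and only if e_n ∈ H_{λ,i}, if and only if p₁p₂⋯p_{i−1}·(e_n − 1) ∈ J_λ. -/
noncomputable section

/-- Parameter sequences: `Y = {0,1}^ℕ`; the paper's `λ(n)` (for `n ≥ 1`) is `l (n-1) : Bool`,
with `0 ↔ false` and `1 ↔ true`. -/
abbrev Y : Type := ℕ → Bool

/-- The 𝔽₂-vector space `V` with basis `{e i, f i : i ∈ ℤ}` (basis indexed by `ℤ × Bool`). -/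
abbrev Vsp : Type := (ℤ × Bool) →₀ ZMod 2

/-- The basis vector `e i`. -/
def e (i : ℤ) : Vsp := Finsupp.single (i, false) 1

/-- The basis vector `f i`. -/
def f (i : ℤ) : Vsp := Finsupp.single (i, true) 1

/-- The permutation of the basis swapping `e 0` and `f 0`. -/
def aPerm : Equiv.Perm (ℤ × Bool) := Equiv.swap ((0 : ℤ), false) ((0 : ℤ), true)

/-- The shift permutation of the basis, `e i ↦ e (i+1)`, `f i ↦ f (i+1)`. -/
def tPerm : Equiv.Perm (ℤ × Bool) := (Equiv.addRight (1 : ℤ)).prodCongr (Equiv.refl Bool)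

/-- The automorphism of `V` induced by a permutation of the basis, viewed as an automorphism
of the (multiplicatively written) group `V`. -/
def permAut (σ : Equiv.Perm (ℤ × Bool)) : MulAut (Multiplicative Vsp) :=
  AddEquiv.toMultiplicative (Finsupp.domCongr σ : Vsp ≃+ Vsp)

/-- The automorphism `a` of `V`. -/
def aAut : MulAut (Multiplicative Vsp) := permAut aPerm

/-- The automorphism `t` of `V`. -/
def tAut : MulAut (Multiplicative Vsp) := permAut tPerm

/-- The subgroup `⟨a, t⟩ ≤ GL(V)`. -/
def Asub : Subgroup (MulAut (Multiplicative Vsp)) := Subgroup.closure {aAut, tAut}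

/-- The group `G = V ⋊ ⟨a, t⟩ ≅ C₂ ≀ C₂ ≀ C_∞`. -/
abbrev G : Type := Multiplicative Vsp ⋊[Asub.subtype] ↥Asub

/-- The inclusion `V → G`. -/
def ofV (v : Vsp) : G := SemidirectProduct.inl (Multiplicative.ofAdd v)

/-- A subgroup of `V`, viewed as a subgroup of `G`. -/
def subgroupOfV (H : AddSubgroup Vsp) : Subgroup G :=
  Subgroup.map SemidirectProduct.inl (AddSubgroup.toSubgroup H)

/-- The sequence `c_λ`: for `n ≥ 1`, `c (2n-1) = e n`, `c (2n) = f n` if `λ(n) = 0`, and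
`c (2n-1) = f n`, `c (2n) = e n` if `λ(n) = 1`. -/
def cseq (l : Y) (m : ℕ) : Vsp :=
  if (m % 2 = 1) ↔ (l ((m + 1) / 2 - 1) = false) then e ((m + 1) / 2) else f ((m + 1) / 2)

/-- The subgroup `H_{λ,i} = ⟨e 0, f 0, e (-1), f (-1), …, e (-i), f (-i), c 1, …, c i⟩ ≤ V`. -/
def Hsub (l : Y) (i : ℕ) : AddSubgroup Vsp :=
  AddSubgroup.closure
    ((fun j : ℕ => e (-(j : ℤ))) '' Set.Icc 0 i ∪ (fun j : ℕ => f (-(j : ℤ))) '' Set.Icc 0 i ∪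
      cseq l '' Set.Icc 1 i)

/-- The integral group ring `ℤG`. -/
abbrev ZG : Type := MonoidAlgebra ℤ G

/-- The element of `ℤG` corresponding to `v ∈ V ≤ G`. -/
def zOfV (v : Vsp) : ZG := MonoidAlgebra.of ℤ G (ofV v)

/-- The (left) ideal of the group ring `kG` generated by `{g - 1 : g ∈ S}`; this is the
mirror image of the right ideal `(S - 1)kG` of the paper (all modules are taken as left
modules here, mirroring the right modules of the paper). -/
def grpIdeal (k : Type) [CommRing k] (S : Set G) : Ideal (MonoidAlgebra k G) :=
  Ideal.span ((fun g : G => (MonoidAlgebra.of k G g : MonoidAlgebra k G) - 1) '' S)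

/-- The permutation module `U_{λ,i} = 𝔽_{p i}G/(H_{λ,i} - 1)𝔽_{p i}G`. -/
def Ui (p : ℕ → ℕ) (l : Y) (i : ℕ) : Type :=
  MonoidAlgebra (ZMod (p i)) G ⧸ grpIdeal (ZMod (p i)) (subgroupOfV (Hsub l i) : Set G)

instance (p : ℕ → ℕ) (l : Y) (i : ℕ) : AddCommGroup (Ui p l i) :=
  inferInstanceAs (AddCommGroup
    (MonoidAlgebra (ZMod (p i)) G ⧸ grpIdeal (ZMod (p i)) (subgroupOfV (Hsub l i) : Set G)))

instance (p : ℕ → ℕ) (l : Y) (i : ℕ) : Module (MonoidAlgebra (ZMod (p i)) G) (Ui p l i) :=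
  inferInstanceAs (Module (MonoidAlgebra (ZMod (p i)) G)
    (MonoidAlgebra (ZMod (p i)) G ⧸ grpIdeal (ZMod (p i)) (subgroupOfV (Hsub l i) : Set G)))

/-- The canonical ring homomorphism `ℤG → 𝔽_qG`, reducing coefficients mod `q`. -/
def coeffHom (q : ℕ) : ZG →+* MonoidAlgebra (ZMod q) G :=
  ((MonoidAlgebra.lift ℤ (MonoidAlgebra (ZMod q) G) G) (MonoidAlgebra.of (ZMod q) G)).toRingHom

/-- `U_{λ,i}` as a `ℤG`-module. -/
instance (p : ℕ → ℕ) (l : Y) (i : ℕ) : Module ZG (Ui p l i) :=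
  Module.compHom _ (coeffHom (p i))

/-- The module generator `u_{λ,i} = 1 + (H_{λ,i} - 1)𝔽_{p i}G` of `U_{λ,i}`. -/
def ui (p : ℕ → ℕ) (l : Y) (i : ℕ) : Ui p l i :=
  (Submodule.Quotient.mk 1 :
    MonoidAlgebra (ZMod (p i)) G ⧸ grpIdeal (ZMod (p i)) (subgroupOfV (Hsub l i) : Set G))

/-- The index set `{1, 2, 3, …}` for the sequences `(p_i)` and `(H_{λ,i})`. -/
abbrev Idx : Type := {i : ℕ // 1 ≤ i}

/-- The element `u_λ = (u_{λ,1}, u_{λ,2}, …) ∈ ∏_{i ≥ 1} U_{λ,i}`. -/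
def ul (p : ℕ → ℕ) (l : Y) : ∀ i : Idx, Ui p l i.1 := fun i => ui p l i.1

/-- The module `M_λ`: the cyclic `ℤG`-submodule of `∏_{i ≥ 1} U_{λ,i}` generated by `u_λ`. -/
def Ml (p : ℕ → ℕ) (l : Y) : Submodule ZG (∀ i : Idx, Ui p l i.1) :=
  Submodule.span ZG {ul p l}

/-- The annihilator ideal `J_λ = ann_{ℤG}(u_λ)`. -/
def Jl (p : ℕ → ℕ) (l : Y) : Ideal ZG :=
  LinearMap.ker (LinearMap.toSpanSingleton ZG (∀ i : Idx, Ui p l i.1) (ul p l))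

/-- The submodule `M(N-1)` of `M = M_λ`, spanned by the elements `(x-1)m`, `m ∈ M`, `x ∈ N`. -/
def MlAug (p : ℕ → ℕ) (l : Y) (N : AddSubgroup Vsp) : Submodule ZG ↥(Ml p l) :=
  Submodule.span ZG {z : ↥(Ml p l) | ∃ x ∈ N, ∃ m : ↥(Ml p l), z = (zOfV x - 1) • m}

/-- The ideal `(N - 1)ℤG` for a subgroup `N ≤ V`. -/
def augV (N : AddSubgroup Vsp) : Ideal ZG :=
  Ideal.span ((fun v : Vsp => zOfV v - 1) '' (N : Set Vsp))


/-!
The first equivalence is read off the generators: `c_{2n-1}` is `e_n` or `f_n` according to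
`λ(n)`, and no other generator of `H_{λ,2n-1}` has a nonzero `e_n`-coordinate.

For the second, write `P = p₁ ⋯ p_{2n-2}`. The component of `P (e_n - 1) u_λ` in `U_{λ,i}`
vanishes for `i ≤ 2n-2` because `p_i ∣ P`, and for `i ≥ 2n-1` as soon as `e_n ∈ H_{λ,i}`.
Conversely, `P` is a unit modulo `p_{2n-1}` since the primes are distinct, and `c (g - 1)` with
`c ≠ 0` lies in the left ideal of `kΓ` spanned by `{h - 1 : h ∈ H}` only if `g ∈ H`: summing
coefficients over each left coset of `H` is compatible with left multiplication, kills every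
`h - 1`, but does not kill `c (g - 1)` when `g ∉ H`.
-/

namespace MonoidAlgebra

variable {k Γ : Type*} [Ring k] [Group Γ] (H : Subgroup Γ)

def cosetCoeffs : MonoidAlgebra k Γ →+ (Γ ⧸ H →₀ k) :=
  (Finsupp.mapDomain.addMonoidHom QuotientGroup.mk).comp coeffAddEquiv.toAddMonoidHom

lemma cosetCoeffs_apply (x : MonoidAlgebra k Γ) :
    cosetCoeffs H x = Finsupp.mapDomain QuotientGroup.mk x.coeff := rfl

lemma cosetCoeffs_single (g : Γ) (c : k) :
    cosetCoeffs H (single g c) = Finsupp.single (g : Γ ⧸ H) c := by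
  rw [cosetCoeffs_apply, coeff_single, Finsupp.mapDomain_single]

lemma cosetCoeffs_single_mul (g : Γ) (c : k) (x : MonoidAlgebra k Γ) :
    cosetCoeffs H (single g c * x) = c • Finsupp.mapDomain (g • ·) (cosetCoeffs H x) := by
  induction x using induction_linear with
  | zero => simp
  | add x y hx hy => rw [mul_add, map_add, hx, hy, map_add, Finsupp.mapDomain_add, smul_add]
  | single h d =>
    rw [single_mul_single, cosetCoeffs_single, cosetCoeffs_single, Finsupp.mapDomain_single,
      Finsupp.smul_single, smul_eq_mul]
    rfl

lemma cosetCoeffs_mul_eq_zero (a : MonoidAlgebra k Γ) {x : MonoidAlgebra k Γ}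
    (hx : cosetCoeffs H x = 0) : cosetCoeffs H (a * x) = 0 := by
  induction a using induction_linear with
  | zero => simp
  | add a b ha hb => rw [add_mul, map_add, ha, hb, add_zero]
  | single g c => rw [cosetCoeffs_single_mul, hx, Finsupp.mapDomain_zero, smul_zero]

lemma cosetCoeffs_eq_zero_of_mem_span {x : MonoidAlgebra k Γ}
    (hx : x ∈ Ideal.span ((fun g : Γ => of k Γ g - 1) '' (H : Set Γ))) :
    cosetCoeffs H x = 0 := by
  induction hx using Submodule.span_induction with
  | mem x hx =>
    obtain ⟨h, hh, rfl⟩ := hx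
    rw [map_sub, of_apply, one_def, cosetCoeffs_single, cosetCoeffs_single,
      (QuotientGroup.eq (a := h) (b := 1)).2 (by simpa using hh), sub_self]
  | zero => exact map_zero _
  | add x y _ _ hx hy => rw [map_add, hx, hy, add_zero]
  | smul a x _ hx => exact cosetCoeffs_mul_eq_zero H a hx

lemma smul_of_sub_one_notMem_span {c : k} (hc : c ≠ 0) {g : Γ} (hg : g ∉ H) :
    c • (of k Γ g - 1) ∉ Ideal.span ((fun g : Γ => of k Γ g - 1) '' (H : Set Γ)) := by
  intro hmem
  have hne : (g : Γ ⧸ H) ≠ ((1 : Γ) : Γ ⧸ H) := fun h =>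
    hg (by simpa using QuotientGroup.eq.1 h)
  have hzero := DFunLike.congr_fun (cosetCoeffs_eq_zero_of_mem_span H hmem) (g : Γ ⧸ H)
  rw [smul_sub, map_sub, of_apply, one_def, smul_single, smul_single, cosetCoeffs_single,
    cosetCoeffs_single, Finsupp.sub_apply, Finsupp.single_eq_same, Finsupp.single_eq_of_ne hne,
    smul_eq_mul, mul_one, sub_zero] at hzero
  exact hc hzero

end MonoidAlgebra

lemma cseq_two_mul_sub_one (l : Y) {n : ℕ} (hn : 1 ≤ n) :
    cseq l (2 * n - 1) = if l (n - 1) then f n else e n := by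
  have hodd : (2 * n - 1) % 2 = 1 := by omega
  have hhalf : (((2 * n - 1 : ℕ) : ℤ) + 1) / 2 = n := by omega
  have hidx : (2 * n - 1 + 1) / 2 - 1 = n - 1 := by omega
  cases hl : l (n - 1) <;> simp [cseq, hodd, hhalf, hidx, hl]

lemma Hsub_le_ker_apply_e (l : Y) {n : ℕ} (hn : 1 ≤ n) (hl : l (n - 1) = true) :
    Hsub l (2 * n - 1) ≤ (Finsupp.applyAddHom ((n : ℤ), false) : Vsp →+ ZMod 2).ker := by
  rw [Hsub, AddSubgroup.closure_le]
  rintro v (((⟨j, -, rfl⟩ | ⟨j, -, rfl⟩) : _ ∨ _) | ⟨m, hm, rfl⟩) <;>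
    simp only [SetLike.mem_coe, AddMonoidHom.mem_ker, Finsupp.applyAddHom_apply]
  · exact Finsupp.single_eq_of_ne (by simp; omega)
  · exact Finsupp.single_eq_of_ne (by simp)
  · obtain ⟨-, hm⟩ := Set.mem_Icc.1 hm
    rcases Nat.lt_or_ge m (2 * n - 1) with hlt | hge
    · unfold cseq
      split_ifs <;> exact Finsupp.single_eq_of_ne (by simp <;> omega)
    · rw [show m = 2 * n - 1 by omega, cseq_two_mul_sub_one l hn, hl, if_pos rfl]
      exact Finsupp.single_eq_of_ne (by simp)

lemma e_mem_Hsub_iff (l : Y) {n : ℕ} (hn : 1 ≤ n) :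
    e n ∈ Hsub l (2 * n - 1) ↔ l (n - 1) = false := by
  constructor
  · intro hmem
    by_contra hl
    have hzero := Hsub_le_ker_apply_e l hn (by simpa using hl) hmem
    simp [e] at hzero
  · intro hl
    apply AddSubgroup.subset_closure
    refine Set.mem_union_right _ ⟨2 * n - 1, Set.mem_Icc.2 ⟨by omega, le_rfl⟩, ?_⟩
    rw [cseq_two_mul_sub_one l hn, hl, if_neg Bool.false_ne_true]

lemma Hsub_mono (l : Y) {i j : ℕ} (h : i ≤ j) : Hsub l i ≤ Hsub l j := by
  have hIcc (a : ℕ) : Set.Icc a i ⊆ Set.Icc a j := Set.Icc_subset_Icc le_rfl h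
  exact AddSubgroup.closure_mono <| Set.union_subset_union
    (Set.union_subset_union (Set.image_mono (hIcc 0)) (Set.image_mono (hIcc 0)))
    (Set.image_mono (hIcc 1))

lemma ofV_mem_subgroupOfV_iff {H : AddSubgroup Vsp} {v : Vsp} :
    ofV v ∈ subgroupOfV H ↔ v ∈ H := by
  rw [subgroupOfV, ofV, Subgroup.mem_map_iff_mem SemidirectProduct.inl_injective]
  rfl

lemma coeffHom_zsmul_zOfV_sub_one (q : ℕ) (P : ℤ) (v : Vsp) :
    coeffHom q (P • (zOfV v - 1)) =
      (P : ZMod q) • (MonoidAlgebra.of (ZMod q) G (ofV v) - 1) := by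
  rw [map_zsmul, map_sub, map_one, coeffHom, zOfV, AlgHom.toRingHom_eq_coe, RingHom.coe_coe,
    MonoidAlgebra.lift_of, Int.cast_smul_eq_zsmul]

lemma of_ofV_sub_one_mem_grpIdeal (k : Type) [CommRing k] {H : AddSubgroup Vsp} {v : Vsp}
    (hv : v ∈ H) : MonoidAlgebra.of k G (ofV v) - 1 ∈ grpIdeal k (subgroupOfV H) :=
  Ideal.subset_span (Set.mem_image_of_mem _ (ofV_mem_subgroupOfV_iff.2 hv))

lemma mem_Jl_iff (p : ℕ → ℕ) (l : Y) (x : ZG) :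
    x ∈ Jl p l ↔
      ∀ i : Idx, coeffHom (p i.1) x ∈ grpIdeal (ZMod (p i.1)) (subgroupOfV (Hsub l i.1)) := by
  have hcomp (i : Idx) : (x • ul p l) i =
      (Submodule.Quotient.mk (coeffHom (p i.1) x) : MonoidAlgebra (ZMod (p i.1)) G ⧸
        grpIdeal (ZMod (p i.1)) (subgroupOfV (Hsub l i.1))) := by
    change coeffHom (p i.1) x • (Submodule.Quotient.mk 1 : MonoidAlgebra (ZMod (p i.1)) G ⧸
      grpIdeal (ZMod (p i.1)) (subgroupOfV (Hsub l i.1))) = _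
    rw [← Submodule.Quotient.mk_smul, smul_eq_mul, mul_one]
  simp only [Jl, LinearMap.mem_ker, LinearMap.toSpanSingleton_apply, funext_iff, Pi.zero_apply,
    hcomp]
  exact forall_congr' fun _ => Submodule.Quotient.mk_eq_zero _

lemma intCast_prod_eq_zero_of_mem (p : ℕ → ℕ) {s : Finset ℕ} {i : ℕ} (hi : i ∈ s) :
    ((∏ j ∈ s, (p j : ℤ) : ℤ) : ZMod (p i)) = 0 :=
  (ZMod.intCast_zmod_eq_zero_iff_dvd _ _).2 (Finset.dvd_prod_of_mem _ hi)

lemma intCast_prod_ne_zero (p : ℕ → ℕ) {s : Finset ℕ} {q : ℕ} (hq : q.Prime)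
    (hs : ∀ j ∈ s, (p j).Prime ∧ p j ≠ q) : ((∏ j ∈ s, (p j : ℤ) : ℤ) : ZMod q) ≠ 0 := by
  have := Fact.mk hq
  rw [Int.cast_prod, Finset.prod_ne_zero_iff]
  intro j hj
  rw [Int.cast_natCast, Ne, ZMod.natCast_eq_zero_iff, Nat.prime_dvd_prime_iff_eq hq (hs j hj).1]
  exact (hs j hj).2.symm

theorem stmt7 (p : ℕ → ℕ) (hp : ∀ i, 1 ≤ i → (p i).Prime)
    (hinj : ∀ i j, 1 ≤ i → 1 ≤ j → p i = p j → i = j)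
    (l : Y) (n : ℕ) (hn : 1 ≤ n) :
    ((l (n - 1) = false) ↔ e n ∈ Hsub l (2 * n - 1)) ∧
    ((l (n - 1) = false) ↔
      (∏ j ∈ Finset.Icc 1 (2 * n - 2), (p j : ℤ)) • (zOfV (e n) - 1) ∈ Jl p l) := by
  refine ⟨(e_mem_Hsub_iff l hn).symm, ?_⟩
  simp only [mem_Jl_iff, coeffHom_zsmul_zOfV_sub_one]
  constructor
  · intro hl i
    by_cases hi : i.1 ≤ 2 * n - 2
    · rw [intCast_prod_eq_zero_of_mem p (Finset.mem_Icc.2 ⟨i.2, hi⟩), zero_smul]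
      exact zero_mem _
    · have he : e n ∈ Hsub l i.1 := Hsub_mono l (by omega) ((e_mem_Hsub_iff l hn).2 hl)
      exact Submodule.smul_of_tower_mem _ _ (of_ofV_sub_one_mem_grpIdeal _ he)
  · intro h
    by_contra hl
    have hi : 1 ≤ 2 * n - 1 := by omega
    have hunit : ((∏ j ∈ Finset.Icc 1 (2 * n - 2), (p j : ℤ) : ℤ) : ZMod (p (2 * n - 1))) ≠ 0 :=
      intCast_prod_ne_zero p (hp _ hi) fun j hj => by
        obtain ⟨hj1, hj2⟩ := Finset.mem_Icc.1 hj
        exact ⟨hp j hj1, fun hpj => by have := hinj _ _ hj1 hi hpj; omega⟩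
    exact MonoidAlgebra.smul_of_sub_one_notMem_span _ hunit
      (ofV_mem_subgroupOfV_iff.not.2 ((e_mem_Hsub_iff l hn).not.2 hl)) (h ⟨2 * n - 1, hi⟩)
end
end

section
/- For all α, β ∈ Y, the modules M_α and M_β have the same finite images as ℤG-modules: for every finite ℤG-module F, F is a quotient of M_α if and only if F is a quotient of M_β. -/
noncomputable section

/-!
Via `M_λ ≅ ℤG ⧸ J_λ`, with `J_λ = ⋂ᵢ (p_i ℤG + (H_{λ,i} - 1)ℤG)` the annihilator of `u_λ`, a
finite quotient `F` of `M_α` is a quotient of `M_β` as soon as `J_β ⊆ J_α + (N - 1)ℤG`, where `N`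
is the kernel of the action of `G` on `F`, a subgroup of finite index.

In the finite group `G/N` the images of `e n` and `f n` coincide: `t` has some finite order `d`
there, so `e 0 ≡ e d`, and conjugating by `a`, which swaps `e 0, f 0` and fixes `e d`, gives
`f 0 ≡ e d ≡ e 0`. Hence `H_{β,i} ≤ H_{α,i} N =: K_i`, and the increasing chain `K_i` stabilises
at some `K_n` because `G/N` is finite. Let `z ∈ J_β`, so `z ∈ p_i ℤG + (K_i - 1)ℤG` for all `i`.
As `ℤG/(K_n - 1)ℤG ≅ ℤ[G/K_n]` is free abelian and the `p_i` are unbounded, `z ∈ (K_n - 1)ℤG`.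
A descending induction from `n` to `1` then peels off `p_j`: writing `z = y + p_j a` with
`y ∈ (K_j - 1)ℤG`, purity of `(K_n - 1)ℤG` puts `a` into `(K_n - 1)ℤG`, and coprimality of the
`p_i` shows that `a` satisfies the congruences beyond `j`; this ends with `z ∈ J_α + (N - 1)ℤG`.
-/

section Ring

variable {R : Type*} [Ring R]

lemma Ideal.nsmul_mem_span_natCast (q : ℕ) (a : R) : q • a ∈ Ideal.span {(q : R)} :=
  Ideal.mem_span_singleton'.mpr ⟨a, by rw [nsmul_eq_mul, Nat.cast_comm]⟩

lemma Ideal.mem_span_natCast_sup_iff {q : ℕ} {I : Ideal R} {z : R} :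
    z ∈ Ideal.span {(q : R)} ⊔ I ↔ ∃ a, ∃ y ∈ I, z = q • a + y := by
  refine ⟨fun hz => ?_, ?_⟩
  · obtain ⟨s, hs, y, hy, rfl⟩ := Submodule.mem_sup.mp hz
    obtain ⟨a, rfl⟩ := Ideal.mem_span_singleton'.mp hs
    exact ⟨a, y, hy, by rw [nsmul_eq_mul, Nat.cast_comm]⟩
  · rintro ⟨a, y, hy, rfl⟩
    exact add_mem (Submodule.mem_sup_left (nsmul_mem_span_natCast q a))
      (Submodule.mem_sup_right hy)

lemma Submodule.mem_of_nsmul_mem_of_coprime {M : Type*} [AddCommGroup M] [Module R M]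
    {L : Submodule R M} {m n : ℕ} (hmn : m.Coprime n) {u : M} (hm : m • u ∈ L)
    (hn : n • u ∈ L) : u ∈ L := by
  obtain ⟨a, b, hab⟩ := Nat.Coprime.isCoprime hmn
  have : u = a • (m • u) + b • (n • u) := by
    rw [← Nat.cast_smul_eq_nsmul ℤ, ← Nat.cast_smul_eq_nsmul ℤ, smul_smul, smul_smul, ← add_smul,
      hab, one_smul]
  rw [this]
  exact add_mem (L.smul_of_tower_mem a hm) (L.smul_of_tower_mem b hn)

lemma Submodule.exists_surjective_of_torsionOf_le {M M' F : Type*} [AddCommGroup M] [Module R M]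
    [AddCommGroup M'] [Module R M'] [AddCommGroup F] [Module R F] {u : M} {u' : M'}
    (φ : (R ∙ u) →ₗ[R] F) (hφ : Function.Surjective φ)
    (h : Ideal.torsionOf R M' u' ≤ Ideal.torsionOf R F (φ ⟨u, mem_span_singleton_self u⟩)) :
    ∃ ψ : (R ∙ u') →ₗ[R] F, Function.Surjective ψ := by
  refine ⟨((Ideal.torsionOf R M' u').liftQ (LinearMap.toSpanSingleton R F _) h).comp
    (Ideal.quotTorsionOfEquivSpanSingleton R M' u').symm.toLinearMap, fun y => ?_⟩
  obtain ⟨⟨_, hm⟩, rfl⟩ := hφ y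
  obtain ⟨r, rfl⟩ := mem_span_singleton.mp hm
  refine ⟨Ideal.quotTorsionOfEquivSpanSingleton R M' u' (Submodule.Quotient.mk r), ?_⟩
  rw [LinearMap.comp_apply, LinearEquiv.coe_coe, LinearEquiv.symm_apply_apply]
  exact (φ.map_smul r _).symm

end Ring

lemma Subgroup.exists_sup_ker_eq_of_monotone {Γ Q : Type*} [Group Γ] [Group Q] [Finite Q]
    (π : Γ →* Q) {H : ℕ → Subgroup Γ} (hH : Monotone H) :
    ∃ n, ∀ i, n ≤ i → H i ⊔ π.ker = H n ⊔ π.ker := by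
  obtain ⟨n, hn⟩ := WellFoundedGT.monotone_chain_condition
    ⟨fun i => (H i).map π, fun _ _ h => Subgroup.map_mono (hH h)⟩
  refine ⟨n, fun i hi => ?_⟩
  rw [← Subgroup.comap_map_eq, ← Subgroup.comap_map_eq]
  exact congrArg (Subgroup.comap π) (hn i hi).symm

namespace MonoidAlgebra

section CoeffReduction

variable {k k' M : Type*} [CommRing k] [CommRing k'] [Monoid M]

lemma mapRingHom_surjective {f : k →+* k'} (hf : Function.Surjective f) :
    Function.Surjective (mapRingHom M f) := by
  rw [coe_mapRingHom]
  exact map_surjective _ hf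

lemma ker_mapRingHom_intCastRingHom (q : ℕ) :
    RingHom.ker (mapRingHom M (Int.castRingHom (ZMod q))) = Ideal.span {(q : ℤ[M])} := by
  ext z
  have hq : ∀ a : ℤ[M], a * q = q • a := fun a => by rw [← Nat.cast_comm, nsmul_eq_mul]
  rw [RingHom.mem_ker, Ideal.mem_span_singleton']
  constructor
  · intro hz
    have hdvd : ∀ m, (q : ℤ) ∣ z.coeff m := fun m =>
      (ZMod.intCast_zmod_eq_zero_iff_dvd _ q).mp (by simpa using congr(($hz).coeff m))
    refine ⟨ofCoeff (z.coeff.mapRange (· / (q : ℤ)) (Int.zero_ediv _)), ?_⟩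
    ext m
    rw [hq, coeff_smul_apply, coeff_ofCoeff, Finsupp.mapRange_apply, nsmul_eq_mul,
      Int.mul_ediv_cancel' (hdvd m)]
  · rintro ⟨a, rfl⟩
    rw [map_mul, map_natCast, natCast_def, ZMod.natCast_self, single_zero, mul_zero]

end CoeffReduction

section AugIdeal

variable {k Γ : Type*} [CommRing k] [Group Γ] {H : Subgroup Γ}

variable (k) in
def augIdeal (H : Subgroup Γ) : Ideal k[Γ] :=
  Ideal.span ((fun g => of k Γ g - 1) '' (H : Set Γ))

lemma of_sub_one_mem_augIdeal {g : Γ} (hg : g ∈ H) : of k Γ g - 1 ∈ augIdeal k H :=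
  Ideal.subset_span ⟨g, hg, rfl⟩

lemma augIdeal_mono {H K : Subgroup Γ} (h : H ≤ K) : augIdeal k H ≤ augIdeal k K :=
  Ideal.span_mono (Set.image_mono h)

lemma augIdeal_sup_le (H K : Subgroup Γ) :
    augIdeal k (H ⊔ K) ≤ augIdeal k H ⊔ augIdeal k K := by
  refine Ideal.span_le.mpr ?_
  rintro _ ⟨g, hg, rfl⟩
  change of k Γ g - 1 ∈ augIdeal k H ⊔ augIdeal k K
  rw [SetLike.mem_coe, Subgroup.sup_eq_closure] at hg
  induction hg using Subgroup.closure_induction with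
  | mem g hg =>
    rcases hg with hg | hg
    · exact Submodule.mem_sup_left (of_sub_one_mem_augIdeal hg)
    · exact Submodule.mem_sup_right (of_sub_one_mem_augIdeal hg)
  | one => rw [map_one, sub_self]; exact zero_mem _
  | mul g h _ _ hg hh =>
    have : of k Γ (g * h) - 1 = of k Γ g * (of k Γ h - 1) + (of k Γ g - 1) := by
      rw [map_mul]; noncomm_ring
    rw [this]
    exact add_mem (Ideal.mul_mem_left _ _ hh) hg
  | inv g _ hg =>
    have : of k Γ g⁻¹ - 1 = -(of k Γ g⁻¹ * (of k Γ g - 1)) := by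
      rw [mul_sub, ← map_mul, inv_mul_cancel, map_one]; noncomm_ring
    rw [this]
    exact neg_mem (Ideal.mul_mem_left _ _ hg)

lemma augIdeal_map_mapRingHom {k' : Type*} [CommRing k'] (f : k →+* k') (H : Subgroup Γ) :
    (augIdeal k H).map (mapRingHom Γ f) = augIdeal k' H := by
  simp only [augIdeal, Ideal.map_span, Set.image_image, map_sub, map_one, of_apply,
    mapRingHom_single]

variable (k H) in
abbrev cosetProj : k[Γ] →ₗ[k] k[Γ ⧸ H] := mapDomainLinearMap k k QuotientGroup.mk

lemma cosetProj_single (g : Γ) (c : k) :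
    cosetProj k H (single g c) = single (QuotientGroup.mk g) c :=
  mapDomainLinearMap_single _ _ _

lemma cosetProj_single_mul (g : Γ) (c : k) (y : k[Γ]) :
    cosetProj k H (single g c * y) = c • mapDomainLinearMap k k (g • ·) (cosetProj k H y) := by
  induction y using induction_linear with
  | zero => simp
  | add x y hx hy => simp only [mul_add, map_add, hx, hy, smul_add]
  | single h d =>
    rw [single_mul_single, cosetProj_single, cosetProj_single, mapDomainLinearMap_single,
      smul_single, smul_eq_mul]
    rfl

lemma cosetProj_mul_eq_zero (x : k[Γ]) {y : k[Γ]} (hy : cosetProj k H y = 0) :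
    cosetProj k H (x * y) = 0 := by
  induction x using induction_linear with
  | zero => simp
  | add x x' hx hx' => rw [add_mul, map_add, hx, hx', add_zero]
  | single g c => rw [cosetProj_single_mul, hy, map_zero, smul_zero]

lemma sub_mapDomain_out_mem_augIdeal (z : k[Γ]) :
    z - mapDomainLinearMap k k Quotient.out (cosetProj k H z) ∈ augIdeal k H := by
  induction z using induction_linear with
  | zero => simp
  | add x y hx hy =>
    rw [map_add, map_add, add_sub_add_comm]
    exact add_mem hx hy
  | single g c =>
    obtain ⟨h, hh⟩ := QuotientGroup.mk_out_eq_mul H g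
    have : single g c - single (QuotientGroup.mk g : Γ ⧸ H).out c =
        single (QuotientGroup.mk g : Γ ⧸ H).out c * (of k Γ (h : Γ)⁻¹ - 1) := by
      rw [mul_sub, mul_one, of_apply, single_mul_single, mul_one, hh, mul_inv_cancel_right]
    rw [cosetProj_single, mapDomainLinearMap_single]
    rw [this]
    exact Ideal.mul_mem_left _ _ (of_sub_one_mem_augIdeal (inv_mem h.2))

lemma mem_augIdeal_iff {z : k[Γ]} : z ∈ augIdeal k H ↔ cosetProj k H z = 0 := by
  refine ⟨fun hz => ?_, fun hz => ?_⟩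
  · induction hz using Submodule.span_induction with
    | mem x hx =>
      obtain ⟨g, hg, rfl⟩ := hx
      have : (QuotientGroup.mk g : Γ ⧸ H) = QuotientGroup.mk 1 := QuotientGroup.eq.mpr (by simpa)
      rw [map_sub, of_apply, one_def, cosetProj_single, cosetProj_single, this, sub_self]
    | zero => simp
    | add x y _ _ hx hy => rw [map_add, hx, hy, add_zero]
    | smul r x _ hx => exact cosetProj_mul_eq_zero r hx
  · simpa [hz] using sub_mapDomain_out_mem_augIdeal (H := H) z

lemma mem_augIdeal_of_smul_mem [IsDomain k] {c : k} (hc : c ≠ 0) {z : k[Γ]}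
    (h : c • z ∈ augIdeal k H) : z ∈ augIdeal k H := by
  rw [mem_augIdeal_iff, map_smul] at h
  exact mem_augIdeal_iff.mpr ((smul_eq_zero.mp h).resolve_left hc)

lemma mem_augIdeal_of_frequently {z : ℤ[Γ]}
    (h : ∃ᶠ q : ℕ in Filter.atTop, z ∈ Ideal.span {(q : ℤ[Γ])} ⊔ augIdeal ℤ H) :
    z ∈ augIdeal ℤ H := by
  refine mem_augIdeal_iff.mpr (MonoidAlgebra.ext (Finsupp.ext fun w => ?_))
  set c := (cosetProj ℤ H z).coeff w
  obtain ⟨q, hz, hq⟩ := (h.and_eventually (Filter.eventually_gt_atTop c.natAbs)).exists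
  obtain ⟨a, y, hy, rfl⟩ := Ideal.mem_span_natCast_sup_iff.mp hz
  have hdvd : (q : ℤ) ∣ c := by
    refine ⟨(cosetProj ℤ H a).coeff w, ?_⟩
    simp only [c, map_add, mem_augIdeal_iff.mp hy, add_zero, map_nsmul]
    exact nsmul_eq_mul ..
  exact Int.eq_zero_of_abs_lt_dvd hdvd (by rw [Int.abs_eq_natAbs]; exact_mod_cast hq)

variable (k Γ) (F : Type*) [AddCommGroup F] [Module k[Γ] F]

def toPermHom : Γ →* Equiv.Perm F :=
  @MulAction.toPermHom Γ F _ (MulAction.compHom F (of k Γ))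

variable {k Γ F}

lemma augIdeal_ker_toPermHom_le_torsionOf (x : F) :
    augIdeal k (toPermHom k Γ F).ker ≤ Ideal.torsionOf k[Γ] F x := by
  refine Ideal.span_le.mpr ?_
  rintro _ ⟨g, hg, rfl⟩
  have : of k Γ g • x = x := congr($(MonoidHom.mem_ker.mp hg) x)
  rw [SetLike.mem_coe, Ideal.mem_torsionOf_iff, sub_smul, one_smul, this, sub_self]

end AugIdeal

section TailAnn

variable {Γ : Type*} [Group Γ] (p : ℕ → ℕ) (H : ℕ → Subgroup Γ)

/-- For `H i = H_{λ,i}` this is the annihilator of the tail `(u_{λ,i})_{i ≥ j}` of `u_λ`. -/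
def tailAnn (j : ℕ) : Ideal ℤ[Γ] :=
  ⨅ (i : ℕ) (_ : j ≤ i), Ideal.span {(p i : ℤ[Γ])} ⊔ augIdeal ℤ (H i)

variable {p H}

lemma mem_tailAnn {j : ℕ} {z : ℤ[Γ]} :
    z ∈ tailAnn p H j ↔ ∀ i, j ≤ i → z ∈ Ideal.span {(p i : ℤ[Γ])} ⊔ augIdeal ℤ (H i) := by
  simp only [tailAnn, Submodule.mem_iInf]

lemma augIdeal_le_tailAnn (hH : Monotone H) (j : ℕ) : augIdeal ℤ (H j) ≤ tailAnn p H j :=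
  fun _ hz => mem_tailAnn.mpr fun _ hi => Submodule.mem_sup_right (augIdeal_mono (hH hi) hz)

lemma nsmul_mem_tailAnn {j : ℕ} {a : ℤ[Γ]} (ha : a ∈ tailAnn p H (j + 1)) :
    p j • a ∈ tailAnn p H j := by
  refine mem_tailAnn.mpr fun i hi => ?_
  rcases hi.eq_or_lt with rfl | hi
  · exact Submodule.mem_sup_left (Ideal.nsmul_mem_span_natCast _ a)
  · exact Submodule.smul_of_tower_mem _ _ (mem_tailAnn.mp ha i hi)

lemma mem_tailAnn_sup_of_mem_augIdeal (hH : Monotone H) (N : Subgroup Γ) {j n : ℕ} (hjn : j ≤ n)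
    (hp : ∀ i, j ≤ i → p i ≠ 0) (hcop : ∀ i i', j ≤ i → i < i' → (p i).Coprime (p i'))
    {c : ℤ[Γ]} (hc : c ∈ augIdeal ℤ (H n ⊔ N))
    (hcj : ∀ i, j ≤ i → c ∈ Ideal.span {(p i : ℤ[Γ])} ⊔ augIdeal ℤ (H i ⊔ N)) :
    c ∈ tailAnn p H j ⊔ augIdeal ℤ N := by
  induction hjn using Nat.decreasingInduction generalizing c with
  | self => exact sup_le_sup_right (augIdeal_le_tailAnn hH n) _ (augIdeal_sup_le _ _ hc)
  | of_succ j hjn ih =>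
    obtain ⟨a, y, hy, rfl⟩ := Ideal.mem_span_natCast_sup_iff.mp (hcj j le_rfl)
    have hHN : ∀ {i i'}, i ≤ i' → augIdeal ℤ (H i ⊔ N) ≤ augIdeal ℤ (H i' ⊔ N) :=
      fun hii' => augIdeal_mono (sup_le_sup_right (hH hii') N)
    have hpa : ∀ i, j ≤ i → p j • a ∈ Ideal.span {(p i : ℤ[Γ])} ⊔ augIdeal ℤ (H i ⊔ N) :=
      fun i hi => by simpa using sub_mem (hcj i hi) (Submodule.mem_sup_right (hHN hi hy))
    have ha : a ∈ augIdeal ℤ (H n ⊔ N) := by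
      refine mem_augIdeal_of_smul_mem (c := (p j : ℤ)) (by exact_mod_cast hp j le_rfl) ?_
      simpa using sub_mem hc (hHN hjn.le hy)
    -- `p j` is prime to every later `p i`, so `a` inherits the congruences of `c` beyond `j`
    have ha' := ih (fun i hi => hp i (by omega)) (fun i i' hi => hcop i i' (by omega)) ha
      fun i hi => Submodule.mem_of_nsmul_mem_of_coprime (hcop j i le_rfl hi) (hpa i (by omega))
        (Submodule.mem_sup_left (Ideal.nsmul_mem_span_natCast _ a))
    obtain ⟨t, ht, w, hw, rfl⟩ := Submodule.mem_sup.mp ha'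
    rw [smul_add, add_right_comm]
    refine add_mem (add_mem (Submodule.mem_sup_left (nsmul_mem_tailAnn ht)) ?_)
      (Submodule.mem_sup_right (Submodule.smul_of_tower_mem _ _ hw))
    exact sup_le_sup_right (augIdeal_le_tailAnn hH j) _ (augIdeal_sup_le _ _ hy)

theorem tailAnn_le_tailAnn_sup {H' : ℕ → Subgroup Γ} (hH : Monotone H) (N : Subgroup Γ)
    (hH' : ∀ i, H' i ≤ H i ⊔ N) (hstab : ∃ n, ∀ i, n ≤ i → H i ⊔ N = H n ⊔ N) {j : ℕ}
    (hp : ∀ i, j ≤ i → (p i).Prime) (hinj : Set.InjOn p (Set.Ici j)) :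
    tailAnn p H' j ≤ tailAnn p H j ⊔ augIdeal ℤ N := by
  intro z hz
  obtain ⟨n, hn⟩ := hstab
  have hz' : ∀ i, j ≤ i → z ∈ Ideal.span {(p i : ℤ[Γ])} ⊔ augIdeal ℤ (H i ⊔ N) := fun i hi =>
    sup_le_sup_left (augIdeal_mono (hH' i)) _ (mem_tailAnn.mp hz i hi)
  have hpt : Filter.Tendsto p Filter.atTop Filter.atTop :=
    (Filter.tendsto_add_atTop_iff_nat j).mp <| Function.Injective.nat_tendsto_atTop
      fun a b h => by simpa using hinj (by simp) (by simp) h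
  have hzn : z ∈ augIdeal ℤ (H (max n j) ⊔ N) := by
    refine mem_augIdeal_of_frequently (hpt.frequently (Filter.Eventually.frequently ?_))
    refine Filter.eventually_atTop.mpr ⟨max n j, fun i hi => ?_⟩
    rw [hn (max n j) (le_max_left n j), ← hn i (le_of_max_le_left hi)]
    exact hz' i (le_of_max_le_right hi)
  refine mem_tailAnn_sup_of_mem_augIdeal hH N (le_max_right n j)
    (fun i hi => (hp i hi).ne_zero) (fun i i' hi hii' => ?_) hzn hz'
  exact (Nat.coprime_primes (hp i hi) (hp i' (by omega))).mpr
    fun h => hii'.ne (hinj (Set.mem_Ici.mpr hi) (Set.mem_Ici.mpr (by omega)) h)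

end TailAnn

end MonoidAlgebra

open MonoidAlgebra

lemma ofV_mem_subgroupOfV {K : AddSubgroup Vsp} {v : Vsp} (hv : v ∈ K) :
    ofV v ∈ subgroupOfV K :=
  ⟨_, hv, rfl⟩

lemma subgroupOfV_closure_le_iff {S : Set Vsp} {L : Subgroup G} :
    subgroupOfV (AddSubgroup.closure S) ≤ L ↔ ∀ v ∈ S, ofV v ∈ L := by
  rw [subgroupOfV, AddSubgroup.toSubgroup_closure, MonoidHom.map_closure, Subgroup.closure_le,
    Set.image_subset_iff]
  exact Iff.rfl

lemma subgroupOfV_mono {K K' : AddSubgroup Vsp} (h : K ≤ K') : subgroupOfV K ≤ subgroupOfV K' :=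
  Subgroup.map_mono fun _ hx => h hx

lemma Hsub_mono_s11 (l : Y) : Monotone (Hsub l) := fun _ _ h =>
  AddSubgroup.closure_mono <| Set.union_subset_union
    (Set.union_subset_union (Set.image_mono (Set.Icc_subset_Icc_right h))
      (Set.image_mono (Set.Icc_subset_Icc_right h)))
    (Set.image_mono (Set.Icc_subset_Icc_right h))

def tG : G := SemidirectProduct.inr ⟨tAut, Subgroup.subset_closure (by simp)⟩

def aG : G := SemidirectProduct.inr ⟨aAut, Subgroup.subset_closure (by simp)⟩

lemma inr_permAut_mul_ofV_mul_inv (σ : Equiv.Perm (ℤ × Bool)) (hσ : permAut σ ∈ Asub)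
    (x : ℤ × Bool) :
    SemidirectProduct.inr ⟨permAut σ, hσ⟩ * ofV (Finsupp.single x 1) *
      (SemidirectProduct.inr ⟨permAut σ, hσ⟩)⁻¹ = ofV (Finsupp.single (σ x) 1) := by
  rw [ofV, ofV, ← map_inv, ← SemidirectProduct.inl_aut]
  exact congrArg (fun v => ofV v) (Finsupp.equivMapDomain_single σ x 1)

lemma tG_mul_ofV_mul_inv (j : ℤ) (b : Bool) :
    tG * ofV (Finsupp.single (j, b) 1) * tG⁻¹ = ofV (Finsupp.single (j + 1, b) 1) :=
  inr_permAut_mul_ofV_mul_inv tPerm _ (j, b)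

lemma aG_mul_ofV_mul_inv (x : ℤ × Bool) :
    aG * ofV (Finsupp.single x 1) * aG⁻¹ = ofV (Finsupp.single (aPerm x) 1) :=
  inr_permAut_mul_ofV_mul_inv aPerm _ x

section FiniteQuotient

variable {Q : Type*} [Group Q] (π : G →* Q)

lemma map_ofV_single_add_natCast (j : ℤ) (b : Bool) (n : ℕ) :
    π (ofV (Finsupp.single (j + n, b) 1)) =
      π tG ^ n * π (ofV (Finsupp.single (j, b) 1)) * (π tG ^ n)⁻¹ := by
  induction n with
  | zero => simp
  | succ n ih =>
    rw [Nat.cast_succ, ← add_assoc, ← tG_mul_ofV_mul_inv, map_mul, map_mul, ih, map_inv]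
    group

theorem map_ofV_e_eq_map_ofV_f [Finite Q] (n : ℕ) : π (ofV (e n)) = π (ofV (f n)) := by
  set d := orderOf (π tG)
  have he : π (ofV (Finsupp.single ((d : ℤ), false) 1)) =
      π (ofV (Finsupp.single (0, false) 1)) := by
    simpa [pow_orderOf_eq_one, d] using map_ofV_single_add_natCast π 0 false d
  have hd : ((d : ℤ), false) ≠ ((0 : ℤ), false) := by
    simpa [d] using (orderOf_pos (π tG)).ne'
  have h0 := congrArg π (aG_mul_ofV_mul_inv ((0 : ℤ), false))
  have hd' := congrArg π (aG_mul_ofV_mul_inv ((d : ℤ), false))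
  rw [aPerm, Equiv.swap_apply_left] at h0
  rw [aPerm, Equiv.swap_apply_of_ne_of_ne hd (by simp)] at hd'
  have hfe : π (ofV (Finsupp.single (0, true) 1)) = π (ofV (Finsupp.single (0, false) 1)) := by
    rw [← h0, map_mul, map_mul, ← he, ← map_mul, ← map_mul, hd']
  have hn := map_ofV_single_add_natCast π 0 true n
  rw [hfe, ← map_ofV_single_add_natCast] at hn
  simpa [e, f] using hn.symm

lemma ofV_cseq_mem_iff [Finite Q] {K : Subgroup G} (hK : π.ker ≤ K) (l : Y) (m : ℕ) :
    ofV (cseq l m) ∈ K ↔ ofV (e ((m + 1) / 2 : ℕ)) ∈ K := by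
  have hef : (ofV (e ((m + 1) / 2 : ℕ)))⁻¹ * ofV (f ((m + 1) / 2 : ℕ)) ∈ K :=
    hK (by rw [MonoidHom.mem_ker, map_mul, map_inv, map_ofV_e_eq_map_ofV_f, inv_mul_cancel])
  have hn : ((m : ℤ) + 1) / 2 = ((m + 1) / 2 : ℕ) := by omega
  unfold cseq
  split_ifs
  · rw [hn]
  · rw [hn, ← mul_inv_cancel_left (ofV (e ((m + 1) / 2 : ℕ))) (ofV (f ((m + 1) / 2 : ℕ))),
      K.mul_mem_cancel_right hef]

lemma subgroupOfV_Hsub_le_sup_ker [Finite Q] (α β : Y) (i : ℕ) :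
    subgroupOfV (Hsub β i) ≤ subgroupOfV (Hsub α i) ⊔ π.ker := by
  have hgen : ∀ v, v ∈ (fun j : ℕ => e (-(j : ℤ))) '' Set.Icc 0 i ∪
      (fun j : ℕ => f (-(j : ℤ))) '' Set.Icc 0 i ∪ cseq α '' Set.Icc 1 i →
      ofV v ∈ subgroupOfV (Hsub α i) ⊔ π.ker := fun v hv =>
    Subgroup.mem_sup_left (ofV_mem_subgroupOfV (AddSubgroup.subset_closure hv))
  refine subgroupOfV_closure_le_iff.mpr fun v hv => ?_
  rcases hv with hv | ⟨m, hm, rfl⟩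
  · exact hgen v (Or.inl hv)
  · rw [ofV_cseq_mem_iff π le_sup_right, ← ofV_cseq_mem_iff π le_sup_right α]
    exact hgen _ (Or.inr ⟨m, hm, rfl⟩)

end FiniteQuotient

lemma coeffHom_eq_mapRingHom (q : ℕ) :
    coeffHom q = mapRingHom G (Int.castRingHom (ZMod q)) := by
  ext <;> simp [coeffHom]

lemma smul_ui_eq_zero_iff (p : ℕ → ℕ) (l : Y) (i : ℕ) (z : ZG) :
    z • ui p l i = 0 ↔ z ∈ Ideal.span {(p i : ZG)} ⊔ augIdeal ℤ (subgroupOfV (Hsub l i)) := by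
  change (Submodule.Quotient.mk (coeffHom (p i) z * 1) : (ZMod (p i))[G] ⧸
    grpIdeal (ZMod (p i)) (subgroupOfV (Hsub l i) : Set G)) = 0 ↔ _
  rw [mul_one, Submodule.Quotient.mk_eq_zero, coeffHom_eq_mapRingHom]
  change _ ∈ augIdeal (ZMod (p i)) _ ↔ _
  rw [← augIdeal_map_mapRingHom (Int.castRingHom _), ← Ideal.mem_comap,
    Ideal.comap_map_of_surjective _ (mapRingHom_surjective (M := G) ZMod.intCast_surjective),
    ← RingHom.ker_eq_comap_bot, ker_mapRingHom_intCastRingHom, sup_comm]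

lemma Jl_eq_tailAnn (p : ℕ → ℕ) (l : Y) :
    Jl p l = tailAnn p (fun i => subgroupOfV (Hsub l i)) 1 := by
  ext z
  rw [mem_tailAnn, Jl, LinearMap.mem_ker, LinearMap.toSpanSingleton_apply, funext_iff]
  simp only [← smul_ui_eq_zero_iff]
  exact ⟨fun h i hi => h ⟨i, hi⟩, fun h i => h i.1 i.2⟩

theorem Jl_le_Jl_sup_augIdeal_ker {p : ℕ → ℕ} (hp : ∀ i, 1 ≤ i → (p i).Prime)
    (hinj : ∀ i j, 1 ≤ i → 1 ≤ j → p i = p j → i = j) {Q : Type*} [Group Q] [Finite Q]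
    (π : G →* Q) (α β : Y) : Jl p β ≤ Jl p α ⊔ augIdeal ℤ π.ker := by
  rw [Jl_eq_tailAnn, Jl_eq_tailAnn]
  exact tailAnn_le_tailAnn_sup (fun _ _ h => subgroupOfV_mono (Hsub_mono_s11 α h)) π.ker
    (subgroupOfV_Hsub_le_sup_ker π α β)
    (Subgroup.exists_sup_ker_eq_of_monotone π fun _ _ h => subgroupOfV_mono (Hsub_mono_s11 α h)) hp
    fun i hi j hj => hinj i j hi hj

theorem stmt11 (p : ℕ → ℕ) (hp : ∀ i, 1 ≤ i → (p i).Prime)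
    (hinj : ∀ i j, 1 ≤ i → 1 ≤ j → p i = p j → i = j) (α β : Y)
    (F : Type) [AddCommGroup F] [Module ZG F] [Finite F] :
    (∃ φ : ↥(Ml p α) →ₗ[ZG] F, Function.Surjective φ) ↔
    (∃ φ : ↥(Ml p β) →ₗ[ZG] F, Function.Surjective φ) := by
  suffices h : ∀ α β : Y, (∃ φ : ↥(Ml p α) →ₗ[ZG] F, Function.Surjective φ) →
      ∃ ψ : ↥(Ml p β) →ₗ[ZG] F, Function.Surjective ψ from ⟨h α β, h β α⟩
  rintro α β ⟨φ, hφ⟩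
  refine Submodule.exists_surjective_of_torsionOf_le φ hφ ?_
  have hα : Jl p α ≤ Ideal.torsionOf ZG F (φ ⟨ul p α, Submodule.mem_span_singleton_self _⟩) :=
    fun z hz => by
      have hz' : z • (⟨ul p α, Submodule.mem_span_singleton_self _⟩ : Ml p α) = 0 :=
        Subtype.ext (LinearMap.mem_ker.mp hz)
      rw [Ideal.mem_torsionOf_iff, ← map_smul, hz', map_zero]
  exact (Jl_le_Jl_sup_augIdeal_ker hp hinj (toPermHom ℤ G F) α β).trans
    (sup_le hα (augIdeal_ker_toPermHom_le_torsionOf _))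
end
end
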